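/- arXiv:2005.08397 — 2 statements merged into one kernel-verified Lean document; each statement's English description precedes it below -/
import Mathlib

section
/- For H ∈ (1/2, 1) and α > 0, the function F(y₁, y₂, y₃) = e^{−α|y₁−y₃|} e^{−α y₂} e^{(1−1/H)(y₁+y₂+y₃)} |e^{−y₂/H} − e^{−y₃/H}|^{2H−2} |1 − e^{−y₁/H}|^{2H−2} is integrable on (0,∞)³. -/
open MeasureTheory Real Set

/-! With `c = 1 - 1/H < 0` and `s = 2H - 2 ∈ (-1, 0)` put `g(y) = e^{cy} |1 - e^{-y/H}|^s`, which is
integrable on `(0, ∞)`: it is `O(y^s)` at `0` and `O(e^{cy})` at `∞`. Factoring `e^{-min(y₂,y₃)/H}`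
out of the difference gives `e^{c(y₂+y₃)} |e^{-y₂/H} - e^{-y₃/H}|^s = g(|y₂ - y₃|)`, so after
dropping `e^{-α|y₁-y₃|} ≤ 1` the integrand is bounded by `g(y₁) · e^{-α y₂} g(|y₃ - y₂|)`: an
integrable function of `y₁` times a convolution integrand in `(y₂, y₃)`. -/

noncomputable def expSingularProfile (c s h y : ℝ) : ℝ :=
  exp (c * y) * |1 - exp (-y / h)| ^ s

variable {c s h : ℝ}

lemma measurable_expSingularProfile : Measurable (expSingularProfile c s h) := by
  unfold expSingularProfile; fun_prop

lemma mul_exp_neg_le_one_sub_exp_neg (x : ℝ) : x * exp (-x) ≤ 1 - exp (-x) := by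
  have h := mul_le_mul_of_nonneg_right (add_one_le_exp x) (exp_pos (-x)).le
  rw [← exp_add, add_neg_cancel, exp_zero] at h
  linarith

lemma exp_neg_div_le_one (hh : 0 < h) {y : ℝ} (hy : 0 ≤ y) : exp (-y / h) ≤ 1 :=
  exp_le_one_iff.mpr (div_nonpos_of_nonpos_of_nonneg (neg_nonpos.mpr hy) hh.le)

lemma mul_le_abs_one_sub_exp_neg_div (hh : 0 < h) {y : ℝ} (hy : y ∈ Icc (0 : ℝ) 1) :
    exp (-1 / h) / h * y ≤ |1 - exp (-y / h)| := by
  rw [abs_of_nonneg (sub_nonneg.mpr (exp_neg_div_le_one hh hy.1))]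
  calc exp (-1 / h) / h * y = y / h * exp (-1 / h) := by ring
    _ ≤ y / h * exp (-(y / h)) := by
        gcongr
        · exact div_nonneg hy.1 hh.le
        · rw [neg_div]; exact neg_le_neg (div_le_div_of_nonneg_right hy.2 hh.le)
    _ ≤ 1 - exp (-y / h) := by rw [neg_div]; exact mul_exp_neg_le_one_sub_exp_neg _

lemma integrableOn_abs_one_sub_exp_neg_div_rpow_Ioc (hs₁ : -1 < s) (hs₀ : s ≤ 0) (hh : 0 < h) :
    IntegrableOn (fun y => |1 - exp (-y / h)| ^ s) (Ioc 0 1) := by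
  set κ := exp (-1 / h) / h
  have hκ : 0 < κ := by positivity
  have hdom : IntegrableOn (fun y : ℝ => κ ^ s * y ^ s) (Ioc 0 1) :=
    (intervalIntegral.intervalIntegrable_rpow' hs₁).1.const_mul _
  refine hdom.mono' (by fun_prop : Measurable _).aestronglyMeasurable ?_
  filter_upwards [ae_restrict_mem measurableSet_Ioc] with y hy
  rw [norm_of_nonneg (by positivity), ← mul_rpow hκ.le hy.1.le]
  exact rpow_le_rpow_of_nonpos (by have := hy.1; positivity)
    (mul_le_abs_one_sub_exp_neg_div hh (Ioc_subset_Icc_self hy)) hs₀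

lemma integrableOn_expSingularProfile_Ioi_one (hc : c < 0) (hs₀ : s ≤ 0) (hh : 0 < h) :
    IntegrableOn (expSingularProfile c s h) (Ioi 1) := by
  have hdom : IntegrableOn (fun y => |1 - exp (-1 / h)| ^ s * exp (c * y)) (Ioi 1) :=
    (integrableOn_exp_mul_Ioi hc 1).const_mul _
  refine hdom.mono' measurable_expSingularProfile.aestronglyMeasurable ?_
  filter_upwards [ae_restrict_mem measurableSet_Ioi] with y (hy : 1 < y)
  have hlt : exp (-1 / h) < 1 := exp_lt_one_iff.mpr (div_neg_of_neg_of_pos (by norm_num) hh)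
  have hmono : exp (-y / h) ≤ exp (-1 / h) := by gcongr
  rw [expSingularProfile, norm_of_nonneg (by positivity), mul_comm]
  refine mul_le_mul_of_nonneg_right
    (rpow_le_rpow_of_nonpos (abs_pos.mpr (sub_ne_zero.mpr hlt.ne')) ?_ hs₀) (exp_pos _).le
  rw [abs_of_pos (by linarith), abs_of_nonneg (by linarith)]
  linarith

lemma integrableOn_expSingularProfile (hc : c < 0) (hs₁ : -1 < s) (hs₀ : s ≤ 0) (hh : 0 < h) :
    IntegrableOn (expSingularProfile c s h) (Ioi 0) := by
  rw [← Ioc_union_Ioi_eq_Ioi zero_le_one]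
  refine IntegrableOn.union ?_ (integrableOn_expSingularProfile_Ioi_one hc hs₀ hh)
  exact (integrableOn_abs_one_sub_exp_neg_div_rpow_Ioc hs₁ hs₀ hh).continuousOn_mul_of_subset
    (by fun_prop) isCompact_Icc measurableSet_Ioc Ioc_subset_Icc_self

lemma integrable_comp_abs_of_integrableOn_Ioi {E : Type*} [NormedAddCommGroup E] {f : ℝ → E}
    (hf : IntegrableOn f (Ioi 0)) : Integrable (fun x => f |x|) := by
  have h_Ioi : IntegrableOn (fun x => f |x|) (Ioi 0) :=
    hf.congr_fun (fun x (hx : 0 < x) => by rw [abs_of_pos hx]) measurableSet_Ioi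
  have h_Iic : IntegrableOn (fun x => f |x|) (Iic 0) := by
    have hneg : MeasurableEmbedding fun x : ℝ => -x := (Homeomorph.neg ℝ).measurableEmbedding
    rw [← Measure.map_neg_eq_self (volume : Measure ℝ), hneg.integrableOn_map_iff]
    simp_rw [Function.comp_def, abs_neg, neg_preimage, neg_Iic, neg_zero]
    exact Iff.mpr integrableOn_Ici_iff_integrableOn_Ioi h_Ioi
  simpa using h_Iic.union h_Ioi

lemma IntegrableOn.prod_univ_mul_comp_sub {s : Set ℝ} {u ψ : ℝ → ℝ} (hu : IntegrableOn u s)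
    (hψ : Integrable ψ) : IntegrableOn (fun q : ℝ × ℝ => u q.1 * ψ (q.2 - q.1)) (s ×ˢ univ) := by
  rw [IntegrableOn, Measure.volume_eq_prod, ← Measure.prod_restrict, Measure.restrict_univ]
  exact (hu.convolution_integrand (ContinuousLinearMap.mul ℝ ℝ) hψ).swap

lemma exp_mul_add_mul_abs_exp_sub_rpow_eq_expSingularProfile (hh : h ≠ 0) (a b : ℝ) :
    exp ((1 - 1 / h) * (a + b)) * |exp (-a / h) - exp (-b / h)| ^ (2 * h - 2) =
      expSingularProfile (1 - 1 / h) (2 * h - 2) h |b - a| := by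
  have of_le : ∀ a b : ℝ, a ≤ b → exp ((1 - 1 / h) * (a + b)) *
      |exp (-a / h) - exp (-b / h)| ^ (2 * h - 2) =
      expSingularProfile (1 - 1 / h) (2 * h - 2) h (b - a) := by
    intro a b _
    have hfac : exp (-a / h) - exp (-b / h) = exp (-a / h) * (1 - exp (-(b - a) / h)) := by
      rw [mul_sub, mul_one, ← exp_add]; congr 2; field_simp; ring
    rw [hfac, abs_mul, abs_of_pos (exp_pos _), mul_rpow (exp_pos _).le (abs_nonneg _),
      ← exp_mul, ← mul_assoc, ← exp_add, expSingularProfile]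
    congr 2
    field_simp
    ring
  rcases le_total a b with hab | hba
  · rw [abs_of_nonneg (sub_nonneg.mpr hab), of_le a b hab]
  · rw [abs_sub_comm b a, abs_of_nonneg (sub_nonneg.mpr hba), ← of_le b a hba, add_comm,
      abs_sub_comm (exp (-a / h))]

lemma norm_integrand_le {α : ℝ} (hh : h ≠ 0) (hα : 0 ≤ α) (y₁ y₂ y₃ : ℝ) :
    ‖exp (-α * |y₁ - y₃|) * exp (-α * y₂) * exp ((1 - 1 / h) * (y₁ + y₂ + y₃)) *
        |exp (-y₂ / h) - exp (-y₃ / h)| ^ (2 * h - 2) * |1 - exp (-y₁ / h)| ^ (2 * h - 2)‖ ≤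
      expSingularProfile (1 - 1 / h) (2 * h - 2) h y₁ *
        (exp (-α * y₂) * expSingularProfile (1 - 1 / h) (2 * h - 2) h |y₃ - y₂|) := by
  have hsplit : exp ((1 - 1 / h) * (y₁ + y₂ + y₃)) =
      exp ((1 - 1 / h) * y₁) * exp ((1 - 1 / h) * (y₂ + y₃)) := by
    rw [← exp_add]; ring_nf
  have hdecay : exp (-α * |y₁ - y₃|) ≤ 1 :=
    exp_le_one_iff.mpr (mul_nonpos_of_nonpos_of_nonneg (neg_nonpos.mpr hα) (abs_nonneg _))
  rw [norm_of_nonneg (by positivity), hsplit]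
  calc _ = exp (-α * |y₁ - y₃|) * (expSingularProfile (1 - 1 / h) (2 * h - 2) h y₁ *
        (exp (-α * y₂) * (exp ((1 - 1 / h) * (y₂ + y₃)) *
          |exp (-y₂ / h) - exp (-y₃ / h)| ^ (2 * h - 2)))) := by
        rw [expSingularProfile]; ring
    _ ≤ _ := by
        rw [exp_mul_add_mul_abs_exp_sub_rpow_eq_expSingularProfile hh]
        exact mul_le_of_le_one_left (by unfold expSingularProfile; positivity) hdecay

theorem stmt5 (H α : ℝ) (hH : H ∈ Set.Ioo (1/2 : ℝ) 1) (hα : 0 < α) :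
    MeasureTheory.IntegrableOn
      (fun p : ℝ × ℝ × ℝ =>
        Real.exp (-α * |p.1 - p.2.2|) * Real.exp (-α * p.2.1) *
          Real.exp ((1 - 1 / H) * (p.1 + p.2.1 + p.2.2)) *
          |Real.exp (-p.2.1 / H) - Real.exp (-p.2.2 / H)| ^ (2 * H - 2) *
          |1 - Real.exp (-p.1 / H)| ^ (2 * H - 2))
      (Set.Ioi (0:ℝ) ×ˢ Set.Ioi (0:ℝ) ×ˢ Set.Ioi (0:ℝ)) := by
  obtain ⟨hH₁, hH₂⟩ := hH
  have hH₀ : 0 < H := by linarith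
  have hc : 1 - 1 / H < 0 := by rw [sub_neg, lt_div_iff₀ hH₀]; linarith
  set g := expSingularProfile (1 - 1 / H) (2 * H - 2) H
  have hg : IntegrableOn g (Ioi 0) :=
    integrableOn_expSingularProfile hc (by linarith) (by linarith) hH₀
  have hk : IntegrableOn (fun q : ℝ × ℝ => exp (-α * q.1) * g |q.2 - q.1|) (Ioi 0 ×ˢ univ) :=
    IntegrableOn.prod_univ_mul_comp_sub (exp_neg_integrableOn_Ioi 0 hα)
      (integrable_comp_abs_of_integrableOn_Ioi hg)
  have hdom : IntegrableOn (fun p : ℝ × ℝ × ℝ => g p.1 * (exp (-α * p.2.1) * g |p.2.2 - p.2.1|))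
      (Ioi 0 ×ˢ Ioi 0 ×ˢ univ) := by
    rw [IntegrableOn, Measure.volume_eq_prod, ← Measure.prod_restrict]
    exact hg.mul_prod hk
  refine (hdom.mono_set (prod_mono subset_rfl (prod_mono subset_rfl (subset_univ _)))).mono'
    (by fun_prop : Measurable _).aestronglyMeasurable
    (ae_of_all _ fun p => norm_integrand_le hH₀.ne' hα.le p.1 p.2.1 p.2.2)
end

section
/- Let H ∈ (1/2, 1), α > 0, and let F be as defined. Then there exists C > 0 depending only on α and H such that for all T > 0, (1/T) ∫_0^T ∫_{y₄}^{∞} ∫_0^{y₃} ∫_0^{y₂} F(y₁, y₂, y₃) dy₁ dy₂ dy₃ dy₄ ≤ (H B(1−H, 2H−1))² / (α² T). -/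
open MeasureTheory Real Set

/-- The classical Beta function as an integral. -/
noncomputable def Beta (x y : ℝ) : ℝ :=
  ∫ u in Set.Ioo (0:ℝ) 1, u ^ (x - 1) * (1 - u) ^ (y - 1)

/-- The function F of the paper. -/
noncomputable def Ffun (H α y₁ y₂ y₃ : ℝ) : ℝ :=
  Real.exp (-α * |y₁ - y₃|) * Real.exp (-α * y₂) *
    Real.exp ((1 - 1 / H) * (y₁ + y₂ + y₃)) *
    |Real.exp (-y₂ / H) - Real.exp (-y₃ / H)| ^ (2 * H - 2) *
    |1 - Real.exp (-y₁ / H)| ^ (2 * H - 2)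

/-!
On `y₁ < y₂ < y₃` the integrand factorises as
`e^{-α|y₁-y₃|} e^{-α y₂} g(y₁) g(y₃ - y₂)` with `g(x) = e^{(1-1/H)x} (1 - e^{-x/H})^{2H-2}`,
and the exponential prefactor is at most `e^{-α y₃}`. The substitution `u = e^{-x/H}` gives
`∫₀^∞ g = H B(1-H, 2H-1)`, which bounds both the `y₁`- and (after `y₂ ↦ y₃ - y₂`) the
`y₂`-integral; the remaining `∫₀^T ∫_{y₄}^∞ e^{-α y₃}` is at most `1/α²`.
-/

lemma integrableOn_Ioo_rpow_mul_one_sub_rpow {a b : ℝ} (ha : 0 < a) (hb : 0 < b) :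
    IntegrableOn (fun u : ℝ => u ^ (a - 1) * (1 - u) ^ (b - 1)) (Ioo 0 1) := by
  have hc := (Complex.betaIntegral_convergent (u := a) (v := b) (by simpa) (by simpa)).norm
  rw [intervalIntegrable_iff_integrableOn_Ioo_of_le zero_le_one] at hc
  refine hc.congr_fun (fun u ⟨hu0, hu1⟩ => ?_) measurableSet_Ioo
  dsimp only
  rw [norm_mul, show 1 - (u : ℂ) = ((1 - u : ℝ) : ℂ) by push_cast; rfl,
    Complex.norm_cpow_eq_rpow_re_of_pos hu0, Complex.norm_cpow_eq_rpow_re_of_pos (by linarith)]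
  simp

lemma image_exp_neg_div_Ioi {c : ℝ} (hc : 0 < c) :
    (fun x => exp (-x / c)) '' Ioi 0 = Ioo 0 1 := by
  ext u
  simp only [mem_image, mem_Ioi, mem_Ioo]
  constructor
  · rintro ⟨x, hx, rfl⟩
    exact ⟨exp_pos _, exp_lt_one_iff.mpr (div_neg_of_neg_of_pos (neg_neg_of_pos hx) hc)⟩
  · rintro ⟨hu0, hu1⟩
    refine ⟨-c * log u, by nlinarith [log_neg hu0 hu1], ?_⟩
    rw [show -(-c * log u) / c = log u by field_simp, exp_log hu0]

lemma abs_deriv_exp_neg_div {c : ℝ} (hc : 0 < c) (x : ℝ) :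
    |exp (-x / c) * (-1 / c)| = exp (-x / c) / c := by
  rw [abs_mul, abs_of_pos (exp_pos _), abs_div, abs_neg, abs_one, abs_of_pos hc, mul_one_div]

lemma hasDerivWithinAt_exp_neg_div (c : ℝ) (s : Set ℝ) (x : ℝ) :
    HasDerivWithinAt (fun x => exp (-x / c)) (exp (-x / c) * (-1 / c)) s x :=
  ((hasDerivAt_neg x).div_const c).exp.hasDerivWithinAt

lemma injOn_exp_neg_div {c : ℝ} (hc : 0 < c) (s : Set ℝ) : InjOn (fun x => exp (-x / c)) s :=
  fun x _ y _ hxy => by simpa [hc.ne'] using exp_injective hxy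

lemma integral_comp_exp_neg_div_Ioi {c : ℝ} (hc : 0 < c) (g : ℝ → ℝ) :
    ∫ x in Ioi 0, exp (-x / c) / c * g (exp (-x / c)) = ∫ u in Ioo 0 1, g u := by
  rw [← image_exp_neg_div_Ioi hc, integral_image_eq_integral_abs_deriv_smul measurableSet_Ioi
    (fun x _ => hasDerivWithinAt_exp_neg_div c _ x) (injOn_exp_neg_div hc _)]
  simp_rw [abs_deriv_exp_neg_div hc, smul_eq_mul]

lemma integrableOn_comp_exp_neg_div_Ioi_iff {c : ℝ} (hc : 0 < c) (g : ℝ → ℝ) :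
    IntegrableOn (fun x => exp (-x / c) / c * g (exp (-x / c))) (Ioi 0) ↔
      IntegrableOn g (Ioo 0 1) := by
  rw [← image_exp_neg_div_Ioi hc, integrableOn_image_iff_integrableOn_abs_deriv_smul
    measurableSet_Ioi (fun x _ => hasDerivWithinAt_exp_neg_div c _ x) (injOn_exp_neg_div hc _)]
  simp_rw [abs_deriv_exp_neg_div hc, smul_eq_mul]

noncomputable def betaWeight (H x : ℝ) : ℝ :=
  exp ((1 - 1 / H) * x) * (1 - exp (-x / H)) ^ (2 * H - 2)

lemma betaWeight_nonneg {H x : ℝ} (hH : 0 < H) (hx : 0 ≤ x) : 0 ≤ betaWeight H x :=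
  mul_nonneg (exp_pos _).le <| rpow_nonneg
    (sub_nonneg.2 <| exp_le_one_iff.2 <| div_nonpos_of_nonpos_of_nonneg (by linarith) hH.le) _

lemma betaWeight_eq {H : ℝ} (hH : 0 < H) (x : ℝ) :
    betaWeight H x = H * (exp (-x / H) / H *
      (exp (-x / H) ^ ((1 - H) - 1) * (1 - exp (-x / H)) ^ ((2 * H - 1) - 1))) := by
  have hpow : exp (-x / H) ^ ((1 - H) - 1) = exp x := by
    rw [← exp_mul]; congr 1; field_simp; ring
  have hexp : exp ((1 - 1 / H) * x) = exp (-x / H) * exp x := by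
    rw [← exp_add]; congr 1; field_simp; ring
  rw [betaWeight, hpow, hexp, show (2 * H - 1) - 1 = 2 * H - 2 by ring]
  field_simp

lemma integral_betaWeight {H : ℝ} (hH : 0 < H) :
    ∫ x in Ioi 0, betaWeight H x = H * Beta (1 - H) (2 * H - 1) := by
  simp_rw [betaWeight_eq hH, integral_const_mul]
  rw [integral_comp_exp_neg_div_Ioi hH (fun u => u ^ ((1 - H) - 1) * (1 - u) ^ ((2 * H - 1) - 1)),
    Beta]

lemma integrableOn_betaWeight {H : ℝ} (hH : H ∈ Ioo (1 / 2 : ℝ) 1) :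
    IntegrableOn (betaWeight H) (Ioi 0) := by
  have hH0 : 0 < H := by linarith [hH.1]
  simp_rw [funext (betaWeight_eq hH0)]
  exact Integrable.const_mul ((integrableOn_comp_exp_neg_div_Ioi_iff hH0 _).2 <|
    integrableOn_Ioo_rpow_mul_one_sub_rpow (by linarith [hH.2]) (by linarith [hH.1])) H

lemma setIntegral_Ioo_betaWeight_le {H : ℝ} (hH : H ∈ Ioo (1 / 2 : ℝ) 1) (b : ℝ) :
    ∫ x in Ioo 0 b, betaWeight H x ≤ ∫ x in Ioi 0, betaWeight H x :=
  setIntegral_mono_set (integrableOn_betaWeight hH)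
    (ae_restrict_of_forall_mem measurableSet_Ioi fun _ hx =>
      betaWeight_nonneg (by linarith [hH.1]) (le_of_lt hx))
    Ioo_subset_Ioi_self.eventuallyLE

lemma integral_Ioo_comp_sub_left (f : ℝ → ℝ) {b : ℝ} (hb : 0 ≤ b) :
    ∫ y in Ioo 0 b, f (b - y) = ∫ y in Ioo 0 b, f y := by
  simp_rw [← integral_Ioc_eq_integral_Ioo, ← intervalIntegral.integral_of_le hb]
  rw [intervalIntegral.integral_comp_sub_left f b, sub_self, sub_zero]

lemma integrableOn_Ioo_comp_sub_left {f : ℝ → ℝ} {b : ℝ} (hb : 0 ≤ b)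
    (hf : IntegrableOn f (Ioo 0 b)) : IntegrableOn (fun y => f (b - y)) (Ioo 0 b) := by
  rw [← intervalIntegrable_iff_integrableOn_Ioo_of_le hb] at hf ⊢
  simpa using (hf.comp_sub_left b).symm

lemma Ffun_nonneg (H α y₁ y₂ y₃ : ℝ) : 0 ≤ Ffun H α y₁ y₂ y₃ := by
  unfold Ffun; positivity

lemma Ffun_eq_mul_betaWeight {H α y₁ y₂ y₃ : ℝ} (hH : 0 < H) (h1 : 0 ≤ y₁) (h23 : y₂ ≤ y₃) :
    Ffun H α y₁ y₂ y₃ =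
      exp (-α * |y₁ - y₃|) * exp (-α * y₂) * (betaWeight H y₁ * betaWeight H (y₃ - y₂)) := by
  have hle_one : ∀ {x}, 0 ≤ x → exp (-x / H) ≤ 1 := fun hx =>
    exp_le_one_iff.2 (div_nonpos_of_nonpos_of_nonneg (by linarith) hH.le)
  have h₁ : |1 - exp (-y₁ / H)| = 1 - exp (-y₁ / H) := abs_of_nonneg (by linarith [hle_one h1])
  have h₂₃ : exp (-y₂ / H) - exp (-y₃ / H) = exp (-y₂ / H) * (1 - exp (-(y₃ - y₂) / H)) := by
    rw [mul_sub, mul_one, ← exp_add]; congr 3; field_simp; ring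
  have h₂₃_nonneg : 0 ≤ 1 - exp (-(y₃ - y₂) / H) := by linarith [hle_one (sub_nonneg.2 h23)]
  have hexp : exp ((1 - 1 / H) * (y₁ + y₂ + y₃)) * exp (-y₂ / H) ^ (2 * H - 2) =
      exp ((1 - 1 / H) * y₁) * exp ((1 - 1 / H) * (y₃ - y₂)) := by
    rw [← exp_mul, ← exp_add, ← exp_add]; congr 1; field_simp; ring
  rw [Ffun, betaWeight, betaWeight, h₁, h₂₃, abs_of_nonneg (mul_nonneg (exp_pos _).le h₂₃_nonneg),
    mul_rpow (exp_pos _).le h₂₃_nonneg]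
  linear_combination (exp (-α * |y₁ - y₃|) * exp (-α * y₂) *
    (1 - exp (-(y₃ - y₂) / H)) ^ (2 * H - 2) * (1 - exp (-y₁ / H)) ^ (2 * H - 2)) * hexp

lemma exp_neg_mul_abs_sub_mul_exp_le {α y₁ y₂ y₃ : ℝ} (hα : 0 ≤ α) (h12 : y₁ ≤ y₂) :
    exp (-α * |y₁ - y₃|) * exp (-α * y₂) ≤ exp (-α * y₃) := by
  rw [← exp_add, exp_le_exp]
  nlinarith [neg_abs_le (y₁ - y₃)]

lemma Ffun_le {H α y₁ y₂ y₃ : ℝ} (hH : 0 < H) (hα : 0 ≤ α) (h1 : 0 ≤ y₁) (h12 : y₁ ≤ y₂)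
    (h23 : y₂ ≤ y₃) :
    Ffun H α y₁ y₂ y₃ ≤ exp (-α * y₃) * betaWeight H (y₃ - y₂) * betaWeight H y₁ := by
  rw [Ffun_eq_mul_betaWeight hH h1 h23, mul_comm (betaWeight H y₁), ← mul_assoc]
  exact mul_le_mul_of_nonneg_right
    (mul_le_mul_of_nonneg_right (exp_neg_mul_abs_sub_mul_exp_le hα h12)
      (betaWeight_nonneg hH (sub_nonneg.2 h23)))
    (betaWeight_nonneg hH h1)

lemma integral_Ffun_dy₁_le {H α y₂ y₃ : ℝ} (hH : H ∈ Ioo (1 / 2 : ℝ) 1) (hα : 0 ≤ α)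
    (h23 : y₂ ≤ y₃) :
    ∫ y₁ in Ioo 0 y₂, Ffun H α y₁ y₂ y₃ ≤
      exp (-α * y₃) * betaWeight H (y₃ - y₂) * ∫ x in Ioi 0, betaWeight H x := by
  have hH0 : 0 < H := by linarith [hH.1]
  calc ∫ y₁ in Ioo 0 y₂, Ffun H α y₁ y₂ y₃
      ≤ ∫ y₁ in Ioo 0 y₂, exp (-α * y₃) * betaWeight H (y₃ - y₂) * betaWeight H y₁ :=
        setIntegral_mono_of_nonneg (fun _ _ => Ffun_nonneg ..)
          (fun _ hy₁ => Ffun_le hH0 hα hy₁.1.le hy₁.2.le h23)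
          (((integrableOn_betaWeight hH).mono_set Ioo_subset_Ioi_self).const_mul _)
    _ = exp (-α * y₃) * betaWeight H (y₃ - y₂) * ∫ y₁ in Ioo 0 y₂, betaWeight H y₁ :=
        integral_const_mul _ _
    _ ≤ exp (-α * y₃) * betaWeight H (y₃ - y₂) * ∫ x in Ioi 0, betaWeight H x :=
        mul_le_mul_of_nonneg_left (setIntegral_Ioo_betaWeight_le hH y₂)
          (mul_nonneg (exp_pos _).le (betaWeight_nonneg hH0 (sub_nonneg.2 h23)))

lemma integral_Ffun_dy₂_le {H α y₃ : ℝ} (hH : H ∈ Ioo (1 / 2 : ℝ) 1) (hα : 0 ≤ α) (h3 : 0 ≤ y₃) :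
    ∫ y₂ in Ioo 0 y₃, ∫ y₁ in Ioo 0 y₂, Ffun H α y₁ y₂ y₃ ≤
      exp (-α * y₃) * (∫ x in Ioi 0, betaWeight H x) ^ 2 := by
  set G := ∫ x in Ioi 0, betaWeight H x
  calc ∫ y₂ in Ioo 0 y₃, ∫ y₁ in Ioo 0 y₂, Ffun H α y₁ y₂ y₃
      ≤ ∫ y₂ in Ioo 0 y₃, exp (-α * y₃) * betaWeight H (y₃ - y₂) * G :=
        setIntegral_mono_of_nonneg (fun _ _ => integral_nonneg fun _ => Ffun_nonneg ..)
          (fun _ hy₂ => integral_Ffun_dy₁_le hH hα hy₂.2.le)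
          (((integrableOn_Ioo_comp_sub_left h3 <|
            (integrableOn_betaWeight hH).mono_set Ioo_subset_Ioi_self).const_mul _).mul_const _)
    _ = exp (-α * y₃) * (∫ y₂ in Ioo 0 y₃, betaWeight H y₂) * G := by
        rw [integral_mul_const, integral_const_mul, integral_Ioo_comp_sub_left _ h3]
    _ ≤ exp (-α * y₃) * G ^ 2 := by
        rw [sq, ← mul_assoc]
        exact mul_le_mul_of_nonneg_right
          (mul_le_mul_of_nonneg_left (setIntegral_Ioo_betaWeight_le hH y₃) (exp_pos _).le)
          (setIntegral_nonneg measurableSet_Ioi fun _ hx =>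
            betaWeight_nonneg (by linarith [hH.1]) (le_of_lt hx))

lemma integral_Ffun_dy₃_le {H α y₄ : ℝ} (hH : H ∈ Ioo (1 / 2 : ℝ) 1) (hα : 0 < α)
    (h4 : 0 ≤ y₄) :
    ∫ y₃ in Ioi y₄, ∫ y₂ in Ioo 0 y₃, ∫ y₁ in Ioo 0 y₂, Ffun H α y₁ y₂ y₃ ≤
      (∫ x in Ioi 0, betaWeight H x) ^ 2 / α * exp (-α * y₄) := by
  calc ∫ y₃ in Ioi y₄, ∫ y₂ in Ioo 0 y₃, ∫ y₁ in Ioo 0 y₂, Ffun H α y₁ y₂ y₃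
      ≤ ∫ y₃ in Ioi y₄, exp (-α * y₃) * (∫ x in Ioi 0, betaWeight H x) ^ 2 :=
        setIntegral_mono_of_nonneg
          (fun _ _ => integral_nonneg fun _ => integral_nonneg fun _ => Ffun_nonneg ..)
          (fun _ hy₃ => integral_Ffun_dy₂_le hH hα.le (h4.trans (le_of_lt hy₃)))
          ((integrableOn_exp_mul_Ioi (neg_lt_zero.2 hα) y₄).mul_const _)
    _ = (∫ x in Ioi 0, betaWeight H x) ^ 2 / α * exp (-α * y₄) := by
        rw [integral_mul_const, integral_exp_mul_Ioi (neg_lt_zero.2 hα)]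
        field_simp

lemma integral_Ffun_dy₄_le {H α T : ℝ} (hH : H ∈ Ioo (1 / 2 : ℝ) 1) (hα : 0 < α)
    (hT : 0 ≤ T) :
    ∫ y₄ in (0 : ℝ)..T, ∫ y₃ in Ioi y₄, ∫ y₂ in Ioo 0 y₃, ∫ y₁ in Ioo 0 y₂, Ffun H α y₁ y₂ y₃ ≤
      (∫ x in Ioi 0, betaWeight H x) ^ 2 / α ^ 2 := by
  set G := ∫ x in Ioi 0, betaWeight H x
  rw [intervalIntegral.integral_of_le hT]
  calc ∫ y₄ in Ioc 0 T, ∫ y₃ in Ioi y₄, ∫ y₂ in Ioo 0 y₃, ∫ y₁ in Ioo 0 y₂, Ffun H α y₁ y₂ y₃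
      ≤ ∫ y₄ in Ioc 0 T, G ^ 2 / α * exp (-α * y₄) :=
        setIntegral_mono_of_nonneg (fun _ _ => integral_nonneg fun _ =>
            integral_nonneg fun _ => integral_nonneg fun _ => Ffun_nonneg ..)
          (fun _ hy₄ => integral_Ffun_dy₃_le hH hα hy₄.1.le)
          (((integrableOn_exp_mul_Ioi (neg_lt_zero.2 hα) 0).mono_set
            Ioc_subset_Ioi_self).const_mul _)
    _ ≤ ∫ y₄ in Ioi 0, G ^ 2 / α * exp (-α * y₄) :=
        setIntegral_mono_set ((integrableOn_exp_mul_Ioi (neg_lt_zero.2 hα) 0).const_mul _)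
          (ae_of_all _ fun _ => by positivity) Ioc_subset_Ioi_self.eventuallyLE
    _ = G ^ 2 / α ^ 2 := by
        rw [integral_const_mul, integral_exp_mul_Ioi (neg_lt_zero.2 hα), mul_zero, exp_zero]
        field_simp

theorem stmt6 (H α : ℝ) (hH : H ∈ Set.Ioo (1/2 : ℝ) 1) (hα : 0 < α)
    (T : ℝ) (hT : 0 < T) :
    (1 / T) * (∫ y₄ in (0:ℝ)..T, ∫ y₃ in Set.Ioi y₄,
        ∫ y₂ in Set.Ioo (0:ℝ) y₃, ∫ y₁ in Set.Ioo (0:ℝ) y₂, Ffun H α y₁ y₂ y₃)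
      ≤ (H * Beta (1 - H) (2 * H - 1)) ^ 2 / (α ^ 2 * T) := by
  calc (1 / T) * (∫ y₄ in (0:ℝ)..T, ∫ y₃ in Ioi y₄,
        ∫ y₂ in Ioo (0:ℝ) y₃, ∫ y₁ in Ioo (0:ℝ) y₂, Ffun H α y₁ y₂ y₃)
      ≤ (1 / T) * ((∫ x in Ioi 0, betaWeight H x) ^ 2 / α ^ 2) :=
        mul_le_mul_of_nonneg_left (integral_Ffun_dy₄_le hH hα hT.le) (by positivity)
    _ = (H * Beta (1 - H) (2 * H - 1)) ^ 2 / (α ^ 2 * T) := by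
        rw [integral_betaWeight (by linarith [hH.1])]
        field_simp
end
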